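/- arXiv:1608.04010 — 5 statements merged into one kernel-verified Lean document; each statement's English description precedes it below -/
import Mathlib

section
/- (Uniqueness in the Lévy–Khintchine formula for intervals) Let −∞ ≤ a < b ≤ ∞, fix t₀ ∈ (a,b), and suppose ψ : (a,b) → ℝ satisfies ψ(t) = c + d(t−t₀) + ∫_ℝ e_λ(t) e^{−λt₀} dμ(λ) for all t ∈ (a,b), where μ is a positive Borel measure on ℝ, c, d ∈ ℝ, e_λ(t) = (1 − λ(t−t₀) − e^{−λ(t−t₀)})/λ² for λ ≠ 0, e₀(t) = −(t−t₀)²/2, and all integrals are finite. Then ∫_ℝ e^{−λt} dμ(λ) < ∞ for every t ∈ (a,b), ψ is twice differentiable with ψ″(t) = −∫_ℝ e^{−λt} dμ(λ) for all t ∈ (a,b), and c = ψ(t₀), d = ψ′(t₀). -/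
open MeasureTheory Real

/-- The elementary kernels of the Lévy–Khintchine formula on intervals:
`e_λ(t) = (1 - λ(t-t₀) - e^{-λ(t-t₀)})/λ²` for `λ ≠ 0` and `e₀(t) = -(t-t₀)²/2`. -/
noncomputable def eFun (t₀ l t : ℝ) : ℝ :=
  if l = 0 then -(t - t₀) ^ 2 / 2
  else (1 - l * (t - t₀) - Real.exp (-l * (t - t₀))) / l ^ 2

/-!
For `l ≠ 0`, `-l² · eFun t₀ l t · e^{-l t₀}` is the Bregman divergence `e^x - e^y - (x - y) e^y`
of `exp` at `x = -l t`, `y = -l t₀`, which is at least `e^w (x - w)² / 2` whenever `y ≤ w ≤ x`.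
So for `t₁ < min t t₀` and `max t t₀ < t₂` the weight `e^{-l t}` is dominated by the kernel at
`t₁` (for `l ≥ 0`) and at `t₂` (for `l ≤ 0`): the Laplace transform is finite on the interval.
It then dominates the first two `t`-derivatives of the kernel locally (the first through the
mean value theorem), so `ψ` can be differentiated twice under the integral sign. Kernel and first
derivative vanish at `t₀`, which identifies `c` and `d`.
-/

open Set Filter Topology

theorem exp_mul_sq_div_two_le_exp_sub_exp_sub {x y w : ℝ} (hyw : y ≤ w) (hwx : w ≤ x) :
    exp w * (x - w) ^ 2 / 2 ≤ exp x - exp y - (x - y) * exp y := by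
  have hx : exp x = exp w * exp (x - w) := by rw [← exp_add]; ring_nf
  have hw : exp w = exp y * exp (w - y) := by rw [← exp_add]; ring_nf
  have h₁ := mul_le_mul_of_nonneg_left (quadratic_le_exp_of_nonneg (sub_nonneg.2 hwx))
    (exp_pos w).le
  have h₂ := mul_le_mul_of_nonneg_left (add_one_le_exp (w - y)) (exp_pos y).le
  have h₃ := mul_nonneg (sub_nonneg.2 hwx) (sub_nonneg.2 (exp_le_exp.2 hyw))
  -- `e^x - e^y - (x-y)e^y`
  --   `= e^w (e^(x-w) - 1 - (x-w)) + e^y (e^(w-y) - 1 - (w-y)) + (x-w)(e^w - e^y)`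
  nlinarith

theorem eFun_neg (t₀ l t : ℝ) : eFun (-t₀) (-l) (-t) = eFun t₀ l t := by
  simp only [eFun, neg_eq_zero]
  split_ifs <;> ring_nf

theorem eFun_self (t₀ l : ℝ) : eFun t₀ l t₀ = 0 := by
  simp [eFun]

theorem eFun_nonpos (t₀ l t : ℝ) : eFun t₀ l t ≤ 0 := by
  unfold eFun
  split_ifs
  · nlinarith [sq_nonneg (t - t₀)]
  · have := add_one_le_exp (-l * (t - t₀))
    exact div_nonpos_of_nonpos_of_nonneg (by linarith) (sq_nonneg l)

theorem eFun_mul_exp_eq (t₀ t : ℝ) {l : ℝ} (hl : l ≠ 0) :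
    eFun t₀ l t * exp (-l * t₀) =
      -(exp (-l * t) - exp (-l * t₀) - (-l * t - -l * t₀) * exp (-l * t₀)) / l ^ 2 := by
  have h : exp (-l * (t - t₀)) * exp (-l * t₀) = exp (-l * t) := by rw [← exp_add]; ring_nf
  simp only [eFun, if_neg hl]
  rw [div_mul_eq_mul_div, sub_mul, h]
  ring

theorem exp_mul_sq_le_neg_eFun_mul_exp {t₀ w s l : ℝ} (hl : l ≤ 0) (h₀ : t₀ ≤ w) (hs : w ≤ s) :
    exp (-l * w) * (s - w) ^ 2 / 2 ≤ -(eFun t₀ l s * exp (-l * t₀)) := by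
  rcases hl.eq_or_lt with rfl | hl
  · have : (s - w) ^ 2 ≤ (s - t₀) ^ 2 := pow_le_pow_left₀ (by linarith) (by linarith) 2
    simp only [eFun, if_pos, neg_zero, zero_mul, exp_zero]
    linarith
  · rw [eFun_mul_exp_eq t₀ s hl.ne, neg_div, neg_neg, le_div_iff₀ (sq_pos_of_neg hl)]
    calc exp (-l * w) * (s - w) ^ 2 / 2 * l ^ 2 = exp (-l * w) * (-l * s - -l * w) ^ 2 / 2 := by
          ring
      _ ≤ _ := exp_mul_sq_div_two_le_exp_sub_exp_sub (by nlinarith) (by nlinarith)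

theorem eFun_mul_exp_nonpos (t₀ l t : ℝ) : eFun t₀ l t * exp (-l * t₀) ≤ 0 :=
  mul_nonpos_of_nonpos_of_nonneg (eFun_nonpos t₀ l t) (exp_pos _).le

theorem exp_neg_mul_le_of_max_lt {t₀ t s l : ℝ} (hl : l ≤ 0) (hs : max t t₀ < s) :
    exp (-l * t) ≤ 2 / (s - max t t₀) ^ 2 * -(eFun t₀ l s * exp (-l * t₀)) := by
  have hw := exp_mul_sq_le_neg_eFun_mul_exp hl (le_max_right t t₀) hs.le
  have ht : exp (-l * t) ≤ exp (-l * max t t₀) :=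
    exp_le_exp.2 (mul_le_mul_of_nonneg_left (le_max_left t t₀) (neg_nonneg.2 hl))
  rw [div_mul_eq_mul_div, le_div_iff₀ (pow_pos (sub_pos.2 hs) 2)]
  nlinarith [sq_nonneg (s - max t t₀)]

theorem exp_neg_mul_le_of_lt_min_of_max_lt {t₀ t₁ t₂ t : ℝ} (l : ℝ) (h₁ : t₁ < min t t₀)
    (h₂ : max t t₀ < t₂) :
    exp (-l * t) ≤ 2 / (min t t₀ - t₁) ^ 2 * -(eFun t₀ l t₁ * exp (-l * t₀)) +
      2 / (t₂ - max t t₀) ^ 2 * -(eFun t₀ l t₂ * exp (-l * t₀)) := by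
  have n₁ : 0 ≤ 2 / (min t t₀ - t₁) ^ 2 * -(eFun t₀ l t₁ * exp (-l * t₀)) :=
    mul_nonneg (by positivity) (neg_nonneg.2 (eFun_mul_exp_nonpos _ _ _))
  have n₂ : 0 ≤ 2 / (t₂ - max t t₀) ^ 2 * -(eFun t₀ l t₂ * exp (-l * t₀)) :=
    mul_nonneg (by positivity) (neg_nonneg.2 (eFun_mul_exp_nonpos _ _ _))
  rcases le_total l 0 with hl | hl
  · linarith [exp_neg_mul_le_of_max_lt hl h₂]
  · -- the case `l ≤ 0` reflected through `eFun_neg`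
    have := exp_neg_mul_le_of_max_lt (t₀ := -t₀) (t := -t) (s := -t₁) (neg_nonpos.2 hl)
      (by rw [max_neg_neg]; linarith)
    rw [show -t₁ - max (-t) (-t₀) = min t t₀ - t₁ by rw [max_neg_neg]; ring] at this
    simp only [eFun_neg, neg_neg, mul_neg, neg_mul] at this n₁ n₂ ⊢
    linarith

theorem integrable_exp_neg_mul_of_integrable_eFun {μ : Measure ℝ} {t₀ t₁ t₂ t : ℝ}
    (h₁ : t₁ < min t t₀) (h₂ : max t t₀ < t₂)
    (hi₁ : Integrable (fun l => eFun t₀ l t₁ * exp (-l * t₀)) μ)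
    (hi₂ : Integrable (fun l => eFun t₀ l t₂ * exp (-l * t₀)) μ) :
    Integrable (fun l => exp (-l * t)) μ :=
  ((hi₁.neg.const_mul _).add (hi₂.neg.const_mul _)).mono' (by fun_prop) <| ae_of_all _ fun l => by
    rw [norm_of_nonneg (exp_pos _).le]
    exact exp_neg_mul_le_of_lt_min_of_max_lt l h₁ h₂

theorem measurable_eFun_mul_exp (t₀ t : ℝ) : Measurable fun l => eFun t₀ l t * exp (-l * t₀) :=
  (Measurable.ite measurableSet_eq measurable_const (by fun_prop)).mul (by fun_prop)

noncomputable def eFunDeriv (t₀ l t : ℝ) : ℝ :=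
  if l = 0 then -(t - t₀) else (exp (-l * t) - exp (-l * t₀)) / l

theorem eFunDeriv_self (t₀ l : ℝ) : eFunDeriv t₀ l t₀ = 0 := by
  simp [eFunDeriv]

theorem measurable_eFunDeriv (t₀ t : ℝ) : Measurable fun l => eFunDeriv t₀ l t :=
  Measurable.ite measurableSet_eq measurable_const (by fun_prop)

theorem hasDerivAt_eFun_mul_exp (t₀ l t : ℝ) :
    HasDerivAt (fun s => eFun t₀ l s * exp (-l * t₀)) (eFunDeriv t₀ l t) t := by
  rcases eq_or_ne l 0 with rfl | hl
  · simp only [eFun, eFunDeriv, if_pos, neg_zero, zero_mul, exp_zero, mul_one]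
    exact ((((hasDerivAt_id' t).sub_const t₀).pow 2).neg.div_const 2).congr_deriv (by ring)
  · simp only [eFun_mul_exp_eq t₀ _ hl, eFunDeriv, if_neg hl]
    have hlin := (hasDerivAt_id' t).const_mul (-l)
    exact ((((hlin.exp.sub_const _).sub ((hlin.sub_const _).mul_const _)).neg.div_const
      (l ^ 2))).congr_deriv (by field_simp; ring)

theorem hasDerivAt_eFunDeriv (t₀ l t : ℝ) :
    HasDerivAt (fun s => eFunDeriv t₀ l s) (-exp (-l * t)) t := by
  rcases eq_or_ne l 0 with rfl | hl
  · simp only [eFunDeriv, if_pos]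
    exact ((hasDerivAt_id' t).sub_const t₀).neg.congr_deriv (by simp)
  · simp only [eFunDeriv, if_neg hl]
    exact ((((hasDerivAt_id' t).const_mul (-l)).exp.sub_const _).div_const l).congr_deriv
      (by field_simp)

theorem exp_neg_mul_le_add_of_mem_Icc {u v s : ℝ} (l : ℝ) (hs : s ∈ Icc u v) :
    exp (-l * s) ≤ exp (-l * u) + exp (-l * v) := by
  rcases le_total 0 l with hl | hl
  · exact (exp_le_exp.2 (by nlinarith [hs.1])).trans (le_add_of_nonneg_right (exp_pos _).le)
  · exact (exp_le_exp.2 (by nlinarith [hs.2])).trans (le_add_of_nonneg_left (exp_pos _).le)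

theorem abs_eFunDeriv_le {u v t₀ s : ℝ} (l : ℝ) (hs : s ∈ Icc u v) (h₀ : t₀ ∈ Icc u v) :
    |eFunDeriv t₀ l s| ≤ (exp (-l * u) + exp (-l * v)) * (v - u) := by
  have hmvt := Convex.norm_image_sub_le_of_norm_hasDerivWithin_le
    (fun x _ => (hasDerivAt_eFunDeriv t₀ l x).hasDerivWithinAt)
    (fun x hx => by rw [norm_neg, norm_of_nonneg (exp_pos _).le]
                    exact exp_neg_mul_le_add_of_mem_Icc l hx)
    (convex_Icc u v) h₀ hs
  rw [eFunDeriv_self, sub_zero, norm_eq_abs, norm_eq_abs] at hmvt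
  refine hmvt.trans (mul_le_mul_of_nonneg_left ?_ (by positivity))
  exact abs_sub_le_iff.2 ⟨by linarith [hs.2, h₀.1], by linarith [hs.1, h₀.2]⟩

section DerivUnderIntegral

variable {μ : Measure ℝ} {t₀ u v t : ℝ}

theorem hasDerivAt_integral_eFun_mul_exp (hut : u < t) (htv : t < v) (h₀ : t₀ ∈ Icc u v)
    (hi : Integrable (fun l => eFun t₀ l t * exp (-l * t₀)) μ)
    (hu : Integrable (fun l => exp (-l * u)) μ) (hv : Integrable (fun l => exp (-l * v)) μ) :
    Integrable (fun l => eFunDeriv t₀ l t) μ ∧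
      HasDerivAt (fun s => ∫ l, eFun t₀ l s * exp (-l * t₀) ∂μ) (∫ l, eFunDeriv t₀ l t ∂μ) t :=
  hasDerivAt_integral_of_dominated_loc_of_deriv_le (Icc_mem_nhds hut htv)
    (.of_forall fun s => (measurable_eFun_mul_exp t₀ s).aestronglyMeasurable) hi
    (measurable_eFunDeriv t₀ t).aestronglyMeasurable
    (ae_of_all _ fun l _ hs => abs_eFunDeriv_le l hs h₀) ((hu.add hv).mul_const (v - u))
    (ae_of_all _ fun l s _ => hasDerivAt_eFun_mul_exp t₀ l s)

theorem hasDerivAt_integral_eFunDeriv (hut : u < t) (htv : t < v)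
    (hi : Integrable (fun l => eFunDeriv t₀ l t) μ)
    (hu : Integrable (fun l => exp (-l * u)) μ) (hv : Integrable (fun l => exp (-l * v)) μ) :
    HasDerivAt (fun s => ∫ l, eFunDeriv t₀ l s ∂μ) (-∫ l, exp (-l * t) ∂μ) t := by
  rw [← integral_neg]
  exact (hasDerivAt_integral_of_dominated_loc_of_deriv_le (Icc_mem_nhds hut htv)
    (.of_forall fun s => (measurable_eFunDeriv t₀ s).aestronglyMeasurable) hi
    (by fun_prop)
    (ae_of_all _ fun l s hs => by
      rw [norm_neg, norm_of_nonneg (exp_pos _).le]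
      exact exp_neg_mul_le_add_of_mem_Icc l hs)
    (hu.add hv) (ae_of_all _ fun l s _ => hasDerivAt_eFunDeriv t₀ l s)).2

end DerivUnderIntegral

theorem IsOpen.exists_mem_lt_min_and_max_lt {I : Set ℝ} (hI : IsOpen I) {x y : ℝ} (hx : x ∈ I)
    (hy : y ∈ I) : ∃ u ∈ I, ∃ v ∈ I, u < min x y ∧ max x y < v := by
  have hmin : min x y ∈ I := by rcases min_choice x y with h | h <;> rw [h] <;> assumption
  have hmax : max x y ∈ I := by rcases max_choice x y with h | h <;> rw [h] <;> assumption
  obtain ⟨u, huI, hu⟩ := (Eventually.and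
    (mem_nhdsWithin_of_mem_nhds (hI.mem_nhds hmin) : ∀ᶠ u in 𝓝[<] min x y, u ∈ I)
    self_mem_nhdsWithin).exists
  obtain ⟨v, hvI, hv⟩ := (Eventually.and
    (mem_nhdsWithin_of_mem_nhds (hI.mem_nhds hmax) : ∀ᶠ v in 𝓝[>] max x y, v ∈ I)
    self_mem_nhdsWithin).exists
  exact ⟨u, huI, v, hvI, hu, hv⟩

section OpenSet

variable {μ : Measure ℝ} {t₀ : ℝ} {I : Set ℝ}

theorem integrable_exp_neg_mul_of_isOpen (hI : IsOpen I) (h₀ : t₀ ∈ I)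
    (hi : ∀ t ∈ I, Integrable (fun l => eFun t₀ l t * exp (-l * t₀)) μ) {t : ℝ} (ht : t ∈ I) :
    Integrable (fun l => exp (-l * t)) μ := by
  obtain ⟨t₁, h₁I, t₂, h₂I, h₁, h₂⟩ := hI.exists_mem_lt_min_and_max_lt ht h₀
  exact integrable_exp_neg_mul_of_integrable_eFun h₁ h₂ (hi t₁ h₁I) (hi t₂ h₂I)

variable {ψ : ℝ → ℝ} {c d : ℝ}

theorem hasDerivAt_of_eq_integral_eFun (hI : IsOpen I) (h₀ : t₀ ∈ I)
    (hi : ∀ t ∈ I, Integrable (fun l => eFun t₀ l t * exp (-l * t₀)) μ)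
    (hψ : ∀ t ∈ I, ψ t = c + d * (t - t₀) + ∫ l, eFun t₀ l t * exp (-l * t₀) ∂μ)
    {t : ℝ} (ht : t ∈ I) :
    Integrable (fun l => eFunDeriv t₀ l t) μ ∧ HasDerivAt ψ (d + ∫ l, eFunDeriv t₀ l t ∂μ) t := by
  obtain ⟨u, huI, v, hvI, hu, hv⟩ := hI.exists_mem_lt_min_and_max_lt ht h₀
  obtain ⟨hut, hu₀⟩ := lt_min_iff.1 hu
  obtain ⟨htv, h₀v⟩ := max_lt_iff.1 hv
  obtain ⟨hint, hderiv⟩ := hasDerivAt_integral_eFun_mul_exp hut htv ⟨hu₀.le, h₀v.le⟩ (hi t ht)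
    (integrable_exp_neg_mul_of_isOpen hI h₀ hi huI) (integrable_exp_neg_mul_of_isOpen hI h₀ hi hvI)
  have hlin : HasDerivAt (fun s => c + d * (s - t₀)) d t :=
    ((((hasDerivAt_id' t).sub_const t₀).const_mul d).const_add c).congr_deriv (mul_one d)
  exact ⟨hint, (hlin.add hderiv).congr_of_eventuallyEq (eventuallyEq_of_mem (hI.mem_nhds ht) hψ)⟩

theorem hasDerivAt_deriv_of_eq_integral_eFun (hI : IsOpen I) (h₀ : t₀ ∈ I)
    (hi : ∀ t ∈ I, Integrable (fun l => eFun t₀ l t * exp (-l * t₀)) μ)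
    (hψ : ∀ t ∈ I, ψ t = c + d * (t - t₀) + ∫ l, eFun t₀ l t * exp (-l * t₀) ∂μ)
    {t : ℝ} (ht : t ∈ I) : HasDerivAt (deriv ψ) (-∫ l, exp (-l * t) ∂μ) t := by
  obtain ⟨u, huI, v, hvI, hu, hv⟩ := hI.exists_mem_lt_min_and_max_lt ht h₀
  have hψ' : deriv ψ =ᶠ[𝓝 t] fun s => d + ∫ l, eFunDeriv t₀ l s ∂μ :=
    eventuallyEq_of_mem (hI.mem_nhds ht) fun s hs =>
      (hasDerivAt_of_eq_integral_eFun hI h₀ hi hψ hs).2.deriv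
  have h := hasDerivAt_integral_eFunDeriv (lt_min_iff.1 hu).1 (max_lt_iff.1 hv).1
    (hasDerivAt_of_eq_integral_eFun hI h₀ hi hψ ht).1
    (integrable_exp_neg_mul_of_isOpen hI h₀ hi huI) (integrable_exp_neg_mul_of_isOpen hI h₀ hi hvI)
  exact (h.const_add d).congr_of_eventuallyEq hψ'

end OpenSet

theorem levy_khintchine_interval_uniqueness_general (a b : EReal)
    (t₀ : ℝ) (ht₀ : a < (t₀ : EReal) ∧ (t₀ : EReal) < b) (ψ : ℝ → ℝ)
    (μ : Measure ℝ) (c d : ℝ)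
    (hrep : ∀ t : ℝ, a < (t : EReal) → (t : EReal) < b →
      Integrable (fun l => eFun t₀ l t * Real.exp (-l * t₀)) μ ∧
      ψ t = c + d * (t - t₀) + ∫ l, eFun t₀ l t * Real.exp (-l * t₀) ∂μ) :
    (∀ t : ℝ, a < (t : EReal) → (t : EReal) < b →
      Integrable (fun l => Real.exp (-l * t)) μ ∧
      HasDerivAt ψ (deriv ψ t) t ∧
      HasDerivAt (deriv ψ) (-∫ l, Real.exp (-l * t) ∂μ) t) ∧
    c = ψ t₀ ∧ d = deriv ψ t₀ := by
  set I : Set ℝ := (↑) ⁻¹' Ioo a b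
  have hI : IsOpen I := isOpen_Ioo.preimage continuous_coe_real_ereal
  have hi : ∀ t ∈ I, Integrable (fun l => eFun t₀ l t * exp (-l * t₀)) μ :=
    fun t ht => (hrep t ht.1 ht.2).1
  have hψ : ∀ t ∈ I, ψ t = c + d * (t - t₀) + ∫ l, eFun t₀ l t * exp (-l * t₀) ∂μ :=
    fun t ht => (hrep t ht.1 ht.2).2
  have hψ' := fun t (ht : t ∈ I) => (hasDerivAt_of_eq_integral_eFun hI ht₀ hi hψ ht).2
  refine ⟨fun t hat htb => ⟨integrable_exp_neg_mul_of_isOpen hI ht₀ hi ⟨hat, htb⟩,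
    (hψ' t ⟨hat, htb⟩).differentiableAt.hasDerivAt,
    hasDerivAt_deriv_of_eq_integral_eFun hI ht₀ hi hψ ⟨hat, htb⟩⟩, ?_, ?_⟩
  · simp [hψ t₀ ht₀, eFun_self]
  · simp [(hψ' t₀ ht₀).deriv, eFunDeriv_self]

/-- Uniqueness in the Lévy–Khintchine formula on an open interval `(a,b)`
(with `-∞ ≤ a < b ≤ ∞`): if `ψ(t) = c + d(t-t₀) + ∫ e_λ(t) e^{-λt₀} dμ(λ)` on
`(a,b)`, then the Laplace transform of `μ` is finite on `(a,b)`, `ψ` is twice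
differentiable with `ψ''(t) = -∫ e^{-λt} dμ(λ)` there, and `c = ψ(t₀)`,
`d = ψ'(t₀)`. -/
theorem levy_khintchine_interval_uniqueness (a b : EReal) (hab : a < b)
    (t₀ : ℝ) (ht₀ : a < (t₀ : EReal) ∧ (t₀ : EReal) < b) (ψ : ℝ → ℝ)
    (μ : Measure ℝ) (c d : ℝ)
    (hrep : ∀ t : ℝ, a < (t : EReal) → (t : EReal) < b →
      Integrable (fun l => eFun t₀ l t * Real.exp (-l * t₀)) μ ∧
      ψ t = c + d * (t - t₀) + ∫ l, eFun t₀ l t * Real.exp (-l * t₀) ∂μ) :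
    (∀ t : ℝ, a < (t : EReal) → (t : EReal) < b →
      Integrable (fun l => Real.exp (-l * t)) μ ∧
      HasDerivAt ψ (deriv ψ t) t ∧
      HasDerivAt (deriv ψ) (-∫ l, Real.exp (-l * t) ∂μ) t) ∧
    c = ψ t₀ ∧ d = deriv ψ t₀ :=
  levy_khintchine_interval_uniqueness_general a b t₀ ht₀ ψ μ c d hrep
end

section
/- For 0 < α ≤ 1, the kernel (s,t) ↦ (s+t)^α on [0,∞) is negative definite; and for 1 ≤ α ≤ 2, the kernel (s,t) ↦ −(s+t)^α on [0,∞) is negative definite. -/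
/-!
For `0 < α < 1` and `1 < α < 2` the substitution `v = s u` shows that `s ^ α` is a positive
multiple of `∫ u > 0, φ (s u) u ^ (-1 - α)`, with `φ v = 1 - exp (-v)`, respectively
`φ v = exp (-v) - 1 + v`. When the coefficients sum to zero, the terms of `φ ((s + t) u)` that are
constant or additive in `s, t` drop out of the quadratic form, which leaves `∓ (∑ cᵢ exp (-xᵢ u))²`
for every `u`; integrating in `u` gives the sign. At `α = 1` the form vanishes, and at `α = 2`
it equals `2 (∑ cᵢ xᵢ)²`.
-/

open MeasureTheory Real

/-- A kernel `K` on a subset `S` is negative definite if it is symmetric on `S` and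
all quadratic forms built from finitely many points of `S` with coefficients summing
to zero are nonpositive. -/
def NegDefKernel {α : Type*} (S : Set α) (K : α → α → ℝ) : Prop :=
  (∀ x ∈ S, ∀ y ∈ S, K x y = K y x) ∧
  ∀ (n : ℕ) (x : Fin n → α), (∀ i, x i ∈ S) →
    ∀ c : Fin n → ℝ, (∑ i, c i = 0) →
      ∑ i, ∑ j, c i * c j * K (x i) (x j) ≤ 0

open Set

section QuadraticForm

variable {n : ℕ} {c : Fin n → ℝ}

lemma sum_sum_mul_eq_zero (hc : ∑ i, c i = 0) : ∑ i, ∑ j, c i * c j = 0 := by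
  rw [← Finset.sum_mul_sum, hc, zero_mul]

lemma sum_sum_mul_add_eq_zero (hc : ∑ i, c i = 0) (x : Fin n → ℝ) :
    ∑ i, ∑ j, c i * c j * (x i + x j) = 0 := by
  have expand : ∀ i j, c i * c j * (x i + x j) = c i * x i * c j + c i * (c j * x j) :=
    fun i j => by ring
  simp_rw [expand, Finset.sum_add_distrib]
  rw [← Finset.sum_mul_sum (f := fun i => c i * x i),
    ← Finset.sum_mul_sum (g := fun j => c j * x j), hc]
  ring

lemma sum_sum_mul_sq_add (hc : ∑ i, c i = 0) (x : Fin n → ℝ) :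
    ∑ i, ∑ j, c i * c j * (x i + x j) ^ 2 = 2 * (∑ i, c i * x i) ^ 2 := by
  have expand : ∀ i j, c i * c j * (x i + x j) ^ 2
      = c i * x i ^ 2 * c j + 2 * (c i * x i) * (c j * x j) + c i * (c j * x j ^ 2) :=
    fun i j => by ring
  simp_rw [expand, Finset.sum_add_distrib]
  rw [← Finset.sum_mul_sum (f := fun i => c i * x i ^ 2),
    ← Finset.sum_mul_sum (f := fun i => 2 * (c i * x i)),
    ← Finset.sum_mul_sum (g := fun j => c j * x j ^ 2), hc, ← Finset.mul_sum]
  ring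

lemma sum_sum_mul_exp_neg_add (c x : Fin n → ℝ) :
    ∑ i, ∑ j, c i * c j * exp (-(x i + x j)) = (∑ i, c i * exp (-x i)) ^ 2 := by
  simp only [sq, Finset.sum_mul_sum, neg_add, exp_add]
  exact Finset.sum_congr rfl fun i _ => Finset.sum_congr rfl fun j _ => by ring

lemma sum_sum_mul_one_sub_exp_neg_add (hc : ∑ i, c i = 0) (x : Fin n → ℝ) :
    ∑ i, ∑ j, c i * c j * (1 - exp (-(x i + x j))) = -(∑ i, c i * exp (-x i)) ^ 2 := by
  simp only [mul_sub, mul_one, Finset.sum_sub_distrib, sum_sum_mul_eq_zero hc,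
    sum_sum_mul_exp_neg_add, zero_sub]

lemma sum_sum_mul_exp_neg_add_sub_one_add (hc : ∑ i, c i = 0) (x : Fin n → ℝ) :
    ∑ i, ∑ j, c i * c j * (exp (-(x i + x j)) - 1 + (x i + x j)) =
      (∑ i, c i * exp (-x i)) ^ 2 := by
  have expand : ∀ i j, c i * c j * (exp (-(x i + x j)) - 1 + (x i + x j)) =
      c i * c j * exp (-(x i + x j)) - c i * c j + c i * c j * (x i + x j) :=
    fun i j => by ring
  simp only [expand, Finset.sum_add_distrib, Finset.sum_sub_distrib, sum_sum_mul_eq_zero hc,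
    sum_sum_mul_exp_neg_add, sum_sum_mul_add_eq_zero hc, sub_zero, add_zero]

end QuadraticForm

section PowerIntegral

variable {α : ℝ} {φ : ℝ → ℝ}

lemma comp_mul_mul_rpow_eqOn {x : ℝ} (hx : 0 < x) :
    EqOn (fun u => φ (x * u) * u ^ (-1 - α))
      (fun u => x ^ (1 + α) * (φ (x * u) * (x * u) ^ (-1 - α))) (Ioi 0) := by
  intro u hu
  have hx_pow : x ^ (1 + α) * x ^ (-1 - α) = 1 := by
    rw [← rpow_add hx]; norm_num
  simp only [mul_rpow hx.le (le_of_lt hu)]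
  linear_combination (φ (x * u) * u ^ (-1 - α)) * hx_pow.symm

lemma integrableOn_comp_mul_mul_rpow (hφ0 : φ 0 = 0)
    (hφ : IntegrableOn (fun v => φ v * v ^ (-1 - α)) (Ioi 0)) {x : ℝ} (hx : 0 ≤ x) :
    IntegrableOn (fun u => φ (x * u) * u ^ (-1 - α)) (Ioi 0) := by
  rcases hx.eq_or_lt with rfl | hx
  · simp [hφ0]
  refine (integrableOn_congr_fun (comp_mul_mul_rpow_eqOn hx) measurableSet_Ioi).mpr
    (Integrable.const_mul ?_ _)
  exact (integrableOn_Ioi_comp_mul_left_iff (fun v => φ v * v ^ (-1 - α)) 0 hx).mpr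
    (by rwa [mul_zero])

lemma integral_comp_mul_mul_rpow (hα : 0 < α) (hφ0 : φ 0 = 0) {x : ℝ} (hx : 0 ≤ x) :
    ∫ u in Ioi 0, φ (x * u) * u ^ (-1 - α) = x ^ α * ∫ v in Ioi 0, φ v * v ^ (-1 - α) := by
  rcases hx.eq_or_lt with rfl | hx
  · simp [hφ0, zero_rpow hα.ne']
  rw [setIntegral_congr_fun measurableSet_Ioi (comp_mul_mul_rpow_eqOn hx), integral_const_mul,
    integral_comp_mul_left_Ioi (fun v => φ v * v ^ (-1 - α)) 0 hx, mul_zero, smul_eq_mul,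
    ← mul_assoc, rpow_add hx, rpow_one]
  field_simp

lemma sum_sum_rpow_add_mul_integral (hα : 0 < α) (hφ0 : φ 0 = 0)
    (hφ : IntegrableOn (fun v => φ v * v ^ (-1 - α)) (Ioi 0)) {n : ℕ} (x c : Fin n → ℝ)
    (hx : ∀ i, 0 ≤ x i) :
    (∑ i, ∑ j, c i * c j * (x i + x j) ^ α) * ∫ v in Ioi 0, φ v * v ^ (-1 - α) =
      ∫ u in Ioi 0, (∑ i, ∑ j, c i * c j * φ ((x i + x j) * u)) * u ^ (-1 - α) := by
  have hint : ∀ i j, Integrable (fun u => c i * c j * (φ ((x i + x j) * u) * u ^ (-1 - α)))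
      (volume.restrict (Ioi 0)) := fun i j =>
    (integrableOn_comp_mul_mul_rpow hφ0 hφ (add_nonneg (hx i) (hx j))).const_mul _
  simp only [Finset.sum_mul, mul_assoc (c _ * c _)]
  rw [integral_finsetSum _ fun i _ => integrable_finsetSum _ fun j _ => hint i j]
  refine Finset.sum_congr rfl fun i _ => ?_
  rw [integral_finsetSum _ fun j _ => hint i j]
  refine Finset.sum_congr rfl fun j _ => ?_
  rw [integral_const_mul, integral_comp_mul_mul_rpow hα hφ0 (add_nonneg (hx i) (hx j))]

lemma integrableOn_mul_rpow_of_le_rpow (hφc : Continuous φ) {a b : ℝ}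
    (ha : α < a) (hb : b < α)
    (hφ_nonneg : ∀ v, 0 < v → 0 ≤ φ v) (hφ_le_a : ∀ v ∈ Ioc 0 1, φ v ≤ v ^ a)
    (hφ_le_b : ∀ v, 1 ≤ v → φ v ≤ v ^ b) :
    IntegrableOn (fun v => φ v * v ^ (-1 - α)) (Ioi 0) := by
  have hmeas : ∀ s ⊆ Ioi (0 : ℝ), MeasurableSet s →
      AEStronglyMeasurable (fun v => φ v * v ^ (-1 - α)) (volume.restrict s) := fun s hs hm =>
    ((hφc.continuousOn.mul (continuousOn_id.rpow_const fun v hv => Or.inl (ne_of_gt hv))).mono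
      hs).aestronglyMeasurable hm
  have hbound : ∀ {p : ℝ} {v : ℝ}, 0 < v → φ v ≤ v ^ p →
      ‖φ v * v ^ (-1 - α)‖ ≤ v ^ (p - 1 - α) := fun {p v} hv hle =>
    calc ‖φ v * v ^ (-1 - α)‖ = φ v * v ^ (-1 - α) :=
          norm_of_nonneg (mul_nonneg (hφ_nonneg v hv) (rpow_nonneg hv.le _))
      _ ≤ v ^ p * v ^ (-1 - α) := mul_le_mul_of_nonneg_right hle (rpow_nonneg hv.le _)
      _ = v ^ (p - 1 - α) := by rw [← rpow_add hv]; ring_nf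
  rw [← Ioc_union_Ioi_eq_Ioi zero_le_one]
  refine IntegrableOn.union ?_ ?_
  · refine Integrable.mono' (g := fun v => v ^ (a - 1 - α)) ?_
      (hmeas _ Ioc_subset_Ioi_self measurableSet_Ioc) ?_
    · exact (intervalIntegrable_iff_integrableOn_Ioc_of_le zero_le_one).mp
        (intervalIntegral.intervalIntegrable_rpow' (by linarith))
    · exact (ae_restrict_iff' measurableSet_Ioc).mpr
        (ae_of_all _ fun v hv => hbound hv.1 (hφ_le_a v hv))
  · refine Integrable.mono' (g := fun v => v ^ (b - 1 - α)) ?_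
      (hmeas _ (Ioi_subset_Ioi zero_le_one) measurableSet_Ioi) ?_
    · exact integrableOn_Ioi_rpow_of_lt (by linarith) zero_lt_one
    · exact (ae_restrict_iff' measurableSet_Ioi).mpr
        (ae_of_all _ fun v hv => hbound (zero_lt_one.trans hv) (hφ_le_b v (le_of_lt hv)))

lemma integral_mul_rpow_pos (hφ_pos : ∀ v, 0 < v → 0 < φ v)
    (hφ : IntegrableOn (fun v => φ v * v ^ (-1 - α)) (Ioi 0)) :
    0 < ∫ v in Ioi 0, φ v * v ^ (-1 - α) := by
  have hpos : ∀ v ∈ Ioi (0 : ℝ), 0 < φ v * v ^ (-1 - α) := fun v hv =>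
    mul_pos (hφ_pos v hv) (rpow_pos_of_pos hv _)
  rw [setIntegral_pos_iff_support_of_nonneg_ae
    ((ae_restrict_iff' measurableSet_Ioi).mpr (ae_of_all _ fun v hv => (hpos v hv).le)) hφ,
    inter_eq_right.mpr (show Ioi (0 : ℝ) ⊆ Function.support _ from fun v hv => (hpos v hv).ne')]
  simp

end PowerIntegral

section PowerKernels

variable {α : ℝ}

lemma integrableOn_one_sub_exp_neg_mul_rpow (h0 : 0 < α) (h1 : α < 1) :
    IntegrableOn (fun v => (1 - exp (-v)) * v ^ (-1 - α)) (Ioi 0) := by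
  refine integrableOn_mul_rpow_of_le_rpow (a := 1) (b := 0) (by fun_prop) h1 h0
    (fun v hv => ?_) (fun v _ => ?_) (fun v _ => ?_)
  · linarith [exp_le_one_iff.mpr (neg_nonpos.mpr hv.le)]
  · rw [rpow_one]
    linarith [add_one_le_exp (-v)]
  · rw [rpow_zero]
    linarith [exp_pos (-v)]

lemma integrableOn_exp_neg_sub_one_add_mul_rpow (h1 : 1 < α) (h2 : α < 2) :
    IntegrableOn (fun v => (exp (-v) - 1 + v) * v ^ (-1 - α)) (Ioi 0) := by
  refine integrableOn_mul_rpow_of_le_rpow (a := 2) (b := 1) (by fun_prop) h2 h1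
    (fun v _ => ?_) (fun v hv => ?_) (fun v hv => ?_)
  · linarith [add_one_le_exp (-v)]
  · have hv_abs : |-v| ≤ 1 := by rw [abs_neg, abs_of_pos hv.1]; exact hv.2
    rw [rpow_two]
    linarith [(abs_le.mp (abs_exp_sub_one_sub_id_le hv_abs)).2, neg_sq v]
  · rw [rpow_one]
    linarith [exp_le_one_iff.mpr (neg_nonpos.mpr (zero_le_one.trans hv))]

theorem negDefKernel_rpow_add (h0 : 0 < α) (h1 : α ≤ 1) :
    NegDefKernel (Ici (0 : ℝ)) fun s t => (s + t) ^ α := by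
  refine ⟨fun s _ t _ => congrArg (· ^ α) (add_comm s t), fun n x hx c hc => ?_⟩
  rcases h1.eq_or_lt with rfl | h1
  · simpa using (sum_sum_mul_add_eq_zero hc x).le
  have hφ := integrableOn_one_sub_exp_neg_mul_rpow h0 h1
  have hI := integral_mul_rpow_pos (fun v hv => by
    linarith [exp_lt_one_iff.mpr (neg_lt_zero.mpr hv)]) hφ
  refine nonpos_of_mul_nonpos_left ?_ hI
  rw [sum_sum_rpow_add_mul_integral h0 (by simp) hφ x c hx]
  refine setIntegral_nonpos measurableSet_Ioi fun u hu =>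
    mul_nonpos_of_nonpos_of_nonneg ?_ (rpow_nonneg (le_of_lt hu) _)
  simpa only [add_mul, sum_sum_mul_one_sub_exp_neg_add hc (x · * u), neg_nonpos] using
    sq_nonneg (∑ i, c i * exp (-(x i * u)))

theorem negDefKernel_neg_rpow_add (h1 : 1 ≤ α) (h2 : α ≤ 2) :
    NegDefKernel (Ici (0 : ℝ)) fun s t => -(s + t) ^ α := by
  refine ⟨fun s _ t _ => congrArg (-· ^ α) (add_comm s t), fun n x hx c hc => ?_⟩
  simp only [mul_neg, Finset.sum_neg_distrib, neg_nonpos]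
  rcases h1.eq_or_lt with rfl | h1
  · simpa using (sum_sum_mul_add_eq_zero hc x).ge
  rcases h2.eq_or_lt with rfl | h2
  · simp only [rpow_two, sum_sum_mul_sq_add hc x]
    positivity
  have h0 : 0 < α := zero_lt_one.trans h1
  have hφ := integrableOn_exp_neg_sub_one_add_mul_rpow h1 h2
  have hI := integral_mul_rpow_pos (fun v hv => by
    linarith [add_one_lt_exp (neg_ne_zero.mpr (ne_of_gt hv))]) hφ
  refine nonneg_of_mul_nonneg_left ?_ hI
  rw [sum_sum_rpow_add_mul_integral h0 (by simp) hφ x c hx]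
  refine setIntegral_nonneg measurableSet_Ioi fun u hu =>
    mul_nonneg ?_ (rpow_nonneg (le_of_lt hu) _)
  simpa only [add_mul, sum_sum_mul_exp_neg_add_sub_one_add hc (x · * u)] using
    sq_nonneg (∑ i, c i * exp (-(x i * u)))

end PowerKernels

/-- For `0 < α ≤ 1` the kernel `(s,t) ↦ (s+t)^α` on `[0,∞)` is negative definite,
and for `1 ≤ α ≤ 2` the kernel `(s,t) ↦ -(s+t)^α` on `[0,∞)` is negative
definite. -/
theorem negDef_power_kernels (α : ℝ) :
    (0 < α → α ≤ 1 →
      NegDefKernel (Set.Ici (0 : ℝ)) (fun s t => (s + t) ^ α)) ∧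
    (1 ≤ α → α ≤ 2 →
      NegDefKernel (Set.Ici (0 : ℝ)) (fun s t => -((s + t) ^ α))) :=
  ⟨negDefKernel_rpow_add, negDefKernel_neg_rpow_add⟩
end

section
/- For α ≥ 0, the function ψ(t) = |t|^α on ℝ is reflection negative with respect to (ℝ, ℝ₊, −id), i.e., the kernel (x,y) ↦ |x−y|^α on ℝ is negative definite and the kernel (s,t) ↦ (s+t)^α on (0,∞) is negative definite, if and only if α ≤ 1. -/
/-!
For `0 < α < 2` and `0 < α < 1` respectively, the substitution `l ↦ l / u` gives, up to a
positive constant, `u ^ α = ∫₀^∞ (1 - cos (u l)) l^(-1-α) dl` and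
`u ^ α = ∫₀^∞ (1 - exp (-u l)) l^(-1-α) dl`. Since
`cos ((x - y) l) = cos (x l) cos (y l) + sin (x l) sin (y l)` and
`exp (-(s + t) l) = exp (-s l) exp (-t l)` are positive semidefinite kernels, one minus them is
negative definite, and integrating against a positive weight preserves this. For `α = 0` the kernels
are constant, and for `α = 1` the kernel `s + t` is negative definite outright. For `α > 1`, the
points `1, 2` with coefficients `1, -1` give `2 ^ α - 2 * 3 ^ α + 4 ^ α > 0` by strict convexity
of `t ↦ t ^ α`.
-/

open MeasureTheory Real

open Set

section Kernels

variable {β : Type*} {S : Set β} {K L : β → β → ℝ}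

theorem NegDefKernel.congr (hK : NegDefKernel S K) (hKL : ∀ x ∈ S, ∀ y ∈ S, K x y = L x y) :
    NegDefKernel S L := by
  refine ⟨fun x hx y hy => ?_, fun n x hx c hc => ?_⟩
  · rw [← hKL x hx y hy, ← hKL y hy x hx, hK.1 x hx y hy]
  · simpa only [hKL _ (hx _) _ (hx _)] using hK.2 n x hx c hc

theorem NegDefKernel.add (hK : NegDefKernel S K) (hL : NegDefKernel S L) :
    NegDefKernel S fun x y => K x y + L x y := by
  refine ⟨fun x hx y hy => congrArg₂ (· + ·) (hK.1 x hx y hy) (hL.1 x hx y hy),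
    fun n x hx c hc => ?_⟩
  simp only [mul_add, Finset.sum_add_distrib]
  exact add_nonpos (hK.2 n x hx c hc) (hL.2 n x hx c hc)

theorem NegDefKernel.mul_const (hK : NegDefKernel S K) {w : ℝ} (hw : 0 ≤ w) :
    NegDefKernel S fun x y => K x y * w := by
  refine ⟨fun x hx y hy => congrArg (· * w) (hK.1 x hx y hy), fun n x hx c hc => ?_⟩
  simp only [← mul_assoc, ← Finset.sum_mul]
  exact mul_nonpos_of_nonpos_of_nonneg (hK.2 n x hx c hc) hw

theorem sum_sum_mul_mul_mul {n : ℕ} (c : Fin n → ℝ) (x : Fin n → β) (a b : β → ℝ) :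
    ∑ i, ∑ j, c i * c j * (a (x i) * b (x j)) = (∑ i, c i * a (x i)) * ∑ j, c j * b (x j) := by
  rw [Finset.sum_mul_sum]
  exact Finset.sum_congr rfl fun i _ => Finset.sum_congr rfl fun j _ => by ring

theorem negDefKernel_const (S : Set β) (a : ℝ) : NegDefKernel S fun _ _ => a := by
  refine ⟨fun _ _ _ _ => rfl, fun n x _ c hc => ?_⟩
  simpa [hc] using (sum_sum_mul_mul_mul c x 1 fun _ => a).le

theorem negDefKernel_neg_mul_self (S : Set β) (f : β → ℝ) :
    NegDefKernel S fun x y => -(f x * f y) := by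
  refine ⟨fun _ _ _ _ => by ring, fun n x _ c _ => ?_⟩
  simp only [mul_neg, Finset.sum_neg_distrib, neg_nonpos]
  rw [sum_sum_mul_mul_mul]
  exact mul_self_nonneg _

theorem negDefKernel_add_apply (S : Set β) (f : β → ℝ) :
    NegDefKernel S fun x y => f x + f y := by
  refine ⟨fun _ _ _ _ => add_comm _ _, fun n x _ c hc => ?_⟩
  have h := sum_sum_mul_mul_mul c x f 1
  have h' := sum_sum_mul_mul_mul c x 1 f
  simp only [Pi.one_apply, mul_one, one_mul, hc, zero_mul, mul_zero] at h h'
  simp only [mul_add, Finset.sum_add_distrib, h, h', add_zero, le_refl]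

theorem NegDefKernel.integral {X : Type*} [MeasurableSpace X] {μ : Measure X}
    {F : β → β → X → ℝ} (hF : ∀ᵐ l ∂μ, NegDefKernel S fun x y => F x y l)
    (hint : ∀ x ∈ S, ∀ y ∈ S, Integrable (F x y) μ) :
    NegDefKernel S fun x y => ∫ l, F x y l ∂μ := by
  refine ⟨fun x hx y hy => integral_congr_ae (hF.mono fun l hl => hl.1 x hx y hy),
    fun n x hx c hc => ?_⟩
  have hint' : ∀ i j, Integrable (fun l => c i * c j * F (x i) (x j) l) μ :=
    fun i j => (hint _ (hx i) _ (hx j)).const_mul _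
  calc ∑ i, ∑ j, c i * c j * ∫ l, F (x i) (x j) l ∂μ
      = ∫ l, ∑ i, ∑ j, c i * c j * F (x i) (x j) l ∂μ := by
        rw [integral_finsetSum _ fun i _ => integrable_finsetSum _ fun j _ => hint' i j]
        refine Finset.sum_congr rfl fun i _ => ?_
        rw [integral_finsetSum _ fun j _ => hint' i j]
        simp only [integral_const_mul]
    _ ≤ 0 := integral_nonpos_of_ae (hF.mono fun l hl => hl.2 n x hx c hc)

end Kernels

section PowerKernels

variable {α : ℝ}

theorem integral_Ioi_one_sub_comp_mul_mul_rpow {g : ℝ → ℝ} (hg : g 0 = 1) (hα : 0 < α) {u : ℝ}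
    (hu : 0 ≤ u) :
    ∫ l in Ioi 0, (1 - g (u * l)) * l ^ (-1 - α)
      = u ^ α * ∫ l in Ioi 0, (1 - g l) * l ^ (-1 - α) := by
  rcases hu.eq_or_lt with rfl | hu
  · simp [hg, zero_rpow hα.ne']
  have hscale := integral_comp_mul_left_Ioi (fun v => (1 - g v) * v ^ (-1 - α)) 0 hu
  rw [mul_zero, smul_eq_mul] at hscale
  have hpow : u ^ (1 + α) * u ^ (-1 - α) = 1 := by
    rw [← rpow_add hu, show 1 + α + (-1 - α) = 0 by ring, rpow_zero]
  calc ∫ l in Ioi 0, (1 - g (u * l)) * l ^ (-1 - α)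
      = u ^ (1 + α) * ∫ l in Ioi 0, (1 - g (u * l)) * (u * l) ^ (-1 - α) := by
        rw [← integral_const_mul]
        refine setIntegral_congr_fun measurableSet_Ioi fun l hl => ?_
        rw [mul_rpow hu.le (le_of_lt hl)]
        linear_combination (-((1 - g (u * l)) * l ^ (-1 - α))) * hpow
    _ = u ^ α * ∫ l in Ioi 0, (1 - g l) * l ^ (-1 - α) := by
        rw [hscale, ← mul_assoc, ← rpow_neg_one, ← rpow_add hu]
        norm_num

theorem integrableOn_Ioi_mul_rpow_neg_one_sub {f : ℝ → ℝ} (hf : Measurable f) (hα : 0 < α)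
    {p C M : ℝ} (hαp : α < p) (hC : ∀ l ∈ Ioi 0, |f l| ≤ C * l ^ p)
    (hM : ∀ l ∈ Ioi 0, |f l| ≤ M) :
    IntegrableOn (fun l => f l * l ^ (-1 - α)) (Ioi 0) := by
  have hmeas : AEStronglyMeasurable (fun l => f l * l ^ (-1 - α)) :=
    (hf.mul (by fun_prop)).aestronglyMeasurable
  rw [← Ioc_union_Ioi_eq_Ioi zero_le_one]
  refine IntegrableOn.union ?_ ?_
  · have hbound : IntegrableOn (fun l => C * l ^ (p - 1 - α)) (Ioc 0 1) := by
      rw [integrableOn_Ioc_iff_integrableOn_Ioo]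
      exact ((intervalIntegral.integrableOn_Ioo_rpow_iff one_pos).2 (by linarith)).const_mul C
    refine hbound.mono' hmeas.restrict <| (ae_restrict_iff' measurableSet_Ioc).2 <|
      ae_of_all _ fun l hl => ?_
    have hl : 0 < l := hl.1
    rw [norm_mul, norm_of_nonneg (rpow_nonneg hl.le _), norm_eq_abs,
      show p - 1 - α = p + (-1 - α) by ring, rpow_add hl, ← mul_assoc]
    exact mul_le_mul_of_nonneg_right (hC l hl) (rpow_nonneg hl.le _)
  · have hbound : IntegrableOn (fun l => M * l ^ (-1 - α)) (Ioi 1) :=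
      (integrableOn_Ioi_rpow_of_lt (by linarith) one_pos).const_mul M
    refine hbound.mono' hmeas.restrict <| (ae_restrict_iff' measurableSet_Ioi).2 <|
      ae_of_all _ fun l hl => ?_
    have hl : 0 < l := zero_lt_one.trans hl
    rw [norm_mul, norm_of_nonneg (rpow_nonneg hl.le _), norm_eq_abs]
    exact mul_le_mul_of_nonneg_right (hM l hl) (rpow_nonneg hl.le _)

theorem setIntegral_Ioi_mul_rpow_pos {f : ℝ → ℝ}
    (hf : IntegrableOn (fun l => f l * l ^ (-1 - α)) (Ioi 0)) (hnonneg : ∀ l ∈ Ioi 0, 0 ≤ f l)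
    (hpos : ∀ l ∈ Ioo 0 1, 0 < f l) :
    0 < ∫ l in Ioi 0, f l * l ^ (-1 - α) := by
  have hnonneg' : 0 ≤ᵐ[volume.restrict (Ioi 0)] fun l => f l * l ^ (-1 - α) :=
    (ae_restrict_iff' measurableSet_Ioi).2 <| ae_of_all _ fun l hl =>
      mul_nonneg (hnonneg l hl) (rpow_nonneg (le_of_lt hl) _)
  rw [setIntegral_pos_iff_support_of_nonneg_ae hnonneg' hf]
  calc (0 : ENNReal) < volume (Ioo (0 : ℝ) 1) := by simp
    _ ≤ _ := by
      refine measure_mono fun l hl => ⟨?_, hl.1⟩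
      exact (mul_pos (hpos l hl) (rpow_pos_of_pos hl.1 _)).ne'

theorem negDefKernel_rpow_of_one_sub {β : Type*} {S : Set β} {u : β → β → ℝ} {g : ℝ → ℝ}
    (hα : 0 < α) (hu : ∀ x ∈ S, ∀ y ∈ S, 0 ≤ u x y) (hg : g 0 = 1)
    (hint : ∀ x ∈ S, ∀ y ∈ S, IntegrableOn (fun l => (1 - g (u x y * l)) * l ^ (-1 - α)) (Ioi 0))
    (hC : 0 < ∫ l in Ioi 0, (1 - g l) * l ^ (-1 - α))
    (hneg : ∀ l ∈ Ioi 0, NegDefKernel S fun x y => 1 - g (u x y * l)) :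
    NegDefKernel S fun x y => u x y ^ α := by
  set C := ∫ l in Ioi 0, (1 - g l) * l ^ (-1 - α)
  refine (NegDefKernel.integral (μ := volume.restrict (Ioi 0))
    (F := fun x y l => (1 - g (u x y * l)) * l ^ (-1 - α) / C) ?_
    fun x hx y hy => (hint x hx y hy).div_const C).congr fun x hx y hy => ?_
  · refine (ae_restrict_iff' measurableSet_Ioi).2 <| ae_of_all _ fun l hl => ?_
    refine ((hneg l hl).mul_const (div_nonneg (rpow_nonneg (le_of_lt hl) (-1 - α)) hC.le)).congr
      fun x _ y _ => ?_
    ring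
  · rw [integral_div, integral_Ioi_one_sub_comp_mul_mul_rpow hg hα (hu x hx y hy),
      mul_div_cancel_right₀ _ hC.ne']

theorem integrableOn_one_sub_cos_mul_mul_rpow (hα : 0 < α) (hα2 : α < 2) (t : ℝ) :
    IntegrableOn (fun l => (1 - cos (t * l)) * l ^ (-1 - α)) (Ioi 0) := by
  refine integrableOn_Ioi_mul_rpow_neg_one_sub (C := t ^ 2 / 2) (M := 2) (by fun_prop) hα hα2
    (fun l _ => ?_) fun l _ => ?_
  · rw [abs_of_nonneg (sub_nonneg.2 (cos_le_one _)), rpow_two]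
    nlinarith [one_sub_sq_div_two_le_cos (x := t * l)]
  · rw [abs_le]
    constructor <;> linarith [cos_le_one (t * l), neg_one_le_cos (t * l)]

theorem integral_one_sub_cos_mul_rpow_pos (hα : 0 < α) (hα2 : α < 2) :
    0 < ∫ l in Ioi 0, (1 - cos l) * l ^ (-1 - α) := by
  refine setIntegral_Ioi_mul_rpow_pos
    (by simpa using integrableOn_one_sub_cos_mul_mul_rpow hα hα2 1)
    (fun l _ => sub_nonneg.2 (cos_le_one l)) fun l hl => sub_pos.2 ?_
  simpa using cos_lt_cos_of_nonneg_of_le_pi le_rfl (by linarith [hl.2, pi_gt_three]) hl.1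

theorem integrableOn_one_sub_exp_neg_mul_mul_rpow (hα : 0 < α) (hα1 : α < 1) {s : ℝ}
    (hs : 0 ≤ s) :
    IntegrableOn (fun l => (1 - exp (-(s * l))) * l ^ (-1 - α)) (Ioi 0) := by
  refine integrableOn_Ioi_mul_rpow_neg_one_sub (C := s) (M := 1) (by fun_prop) hα hα1
    (fun l hl => ?_) fun l hl => ?_
  all_goals
    have hexp : exp (-(s * l)) ≤ 1 := exp_le_one_iff.2 (by nlinarith [mem_Ioi.1 hl])
    rw [abs_of_nonneg (sub_nonneg.2 hexp)]
  · rw [rpow_one]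
    linarith [add_one_le_exp (-(s * l))]
  · linarith [exp_pos (-(s * l))]

theorem integral_one_sub_exp_neg_mul_rpow_pos (hα : 0 < α) (hα1 : α < 1) :
    0 < ∫ l in Ioi 0, (1 - exp (-l)) * l ^ (-1 - α) :=
  setIntegral_Ioi_mul_rpow_pos
    (by simpa using integrableOn_one_sub_exp_neg_mul_mul_rpow hα hα1 zero_le_one)
    (fun l hl => sub_nonneg.2 (exp_le_one_iff.2 (neg_nonpos.2 (le_of_lt hl))))
    fun l hl => sub_pos.2 (exp_lt_one_iff.2 (neg_neg_of_pos hl.1))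

theorem negDefKernel_abs_sub_rpow (hα : 0 < α) (hα2 : α < 2) :
    NegDefKernel univ fun x y : ℝ => |x - y| ^ α := by
  refine negDefKernel_rpow_of_one_sub hα (fun _ _ _ _ => abs_nonneg _) cos_zero
    (fun _ _ _ _ => integrableOn_one_sub_cos_mul_mul_rpow hα hα2 _)
    (integral_one_sub_cos_mul_rpow_pos hα hα2) fun l hl => ?_
  refine ((negDefKernel_const univ 1).add <|
    (negDefKernel_neg_mul_self univ fun x => cos (x * l)).add
      (negDefKernel_neg_mul_self univ fun x => sin (x * l))).congr fun x _ y _ => ?_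
  rw [show |x - y| * l = |(x - y) * l| by rw [abs_mul, abs_of_pos (mem_Ioi.1 hl)], cos_abs,
    sub_mul, cos_sub]
  ring

theorem negDefKernel_add_rpow (hα : 0 < α) (hα1 : α < 1) :
    NegDefKernel (Ioi 0) fun s t : ℝ => (s + t) ^ α := by
  refine negDefKernel_rpow_of_one_sub (g := fun v => exp (-v)) hα
    (fun x hx y hy => (add_pos hx hy).le) (by simp)
    (fun x hx y hy => integrableOn_one_sub_exp_neg_mul_mul_rpow hα hα1 (add_pos hx hy).le)
    (integral_one_sub_exp_neg_mul_rpow_pos hα hα1) fun l _ => ?_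
  refine ((negDefKernel_const _ 1).add
    (negDefKernel_neg_mul_self _ fun x => exp (-(x * l)))).congr fun x _ y _ => ?_
  rw [← exp_add, add_mul, neg_add]
  ring

theorem not_negDefKernel_add_rpow (hα : 1 < α) :
    ¬ NegDefKernel (Ioi 0) fun s t : ℝ => (s + t) ^ α := by
  intro h
  have hquad : (2 : ℝ) ^ α - 2 * 3 ^ α + 4 ^ α ≤ 0 := by
    have := h.2 2 ![1, 2] (by intro i; fin_cases i <;> norm_num) ![1, -1] (by simp)
    norm_num [Fin.sum_univ_two] at this
    linarith
  have hmidpoint := (strictConvexOn_rpow hα).2 (mem_Ici.2 zero_le_two) (mem_Ici.2 zero_le_four)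
    (by norm_num) one_half_pos one_half_pos (add_halves 1)
  norm_num at hmidpoint
  linarith

end PowerKernels

/-- For `α ≥ 0`, the function `ψ(t) = |t|^α` is reflection negative with respect to
`(ℝ, ℝ₊, -id)`, i.e. the kernel `(x,y) ↦ |x-y|^α` on `ℝ` is negative definite and
the kernel `(s,t) ↦ (s+t)^α` on `(0,∞)` is negative definite, if and only if
`α ≤ 1`. -/
theorem abs_rpow_reflection_negative_iff (α : ℝ) (hα : 0 ≤ α) :
    (NegDefKernel (Set.univ : Set ℝ) (fun x y => |x - y| ^ α) ∧
      NegDefKernel (Set.Ioi (0 : ℝ)) (fun s t => (s + t) ^ α)) ↔ α ≤ 1 := by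
  refine ⟨fun ⟨_, hadd⟩ => not_lt.1 fun hα1 => not_negDefKernel_add_rpow hα1 hadd, fun hα1 => ?_⟩
  rcases hα.eq_or_lt with rfl | hα0
  · simpa only [rpow_zero] using ⟨negDefKernel_const _ 1, negDefKernel_const _ 1⟩
  refine ⟨negDefKernel_abs_sub_rpow hα0 (by linarith), ?_⟩
  rcases hα1.lt_or_eq with hα1 | rfl
  · exact negDefKernel_add_rpow hα0 hα1
  · simpa only [rpow_one] using negDefKernel_add_apply (Ioi 0) fun s => s
end

section
/- If φ : ℝ → [0,∞) is an even continuous function which is convex and decreasing on [0,∞), then φ is positive definite on ℝ, i.e., the kernel (x,y) ↦ φ(x−y) on ℝ is positive definite. -/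
/-!
Only the values of `φ` at the finitely many distances `|xᵢ - xⱼ|` enter the quadratic form. On a
finite set `D ⊆ [0, ∞)` a convex nonincreasing `φ` agrees with
`φ (max D) + ∑_{e ∈ D} aₑ (e - t)₊` for some `aₑ ≥ 0`: subtract the secant through the two largest
points of `D` and induct. Each tent kernel `(e - |x - y|)₊` is the `L²` inner product of the
indicators of `[x, x + e]` and `[y, y + e]`, hence positive definite, and positive definite kernels
form a convex cone containing the nonnegative constants.
-/

open MeasureTheory Real

def PosDefKernel {α : Type*} (S : Set α) (K : α → α → ℝ) : Prop :=
  ∀ (n : ℕ) (x : Fin n → α), (∀ i, x i ∈ S) →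
    ∀ c : Fin n → ℝ, 0 ≤ ∑ i, ∑ j, c i * c j * K (x i) (x j)

namespace PosDefKernel

variable {α : Type*} {S : Set α}

theorem const {r : ℝ} (hr : 0 ≤ r) : PosDefKernel S fun _ _ => r := by
  intro n x _ c
  have : ∑ i, ∑ j, c i * c j * r = r * (∑ i, c i) ^ 2 := by
    rw [sq, Finset.sum_mul_sum, Finset.mul_sum]
    exact Finset.sum_congr rfl fun i _ => by
      rw [Finset.mul_sum]; exact Finset.sum_congr rfl fun j _ => by ring
  rw [this]
  positivity

theorem const_mul {K : α → α → ℝ} (hK : PosDefKernel S K) {r : ℝ} (hr : 0 ≤ r) :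
    PosDefKernel S fun x y => r * K x y := by
  intro n x hx c
  have : ∑ i, ∑ j, c i * c j * (r * K (x i) (x j)) = r * ∑ i, ∑ j, c i * c j * K (x i) (x j) := by
    simp only [Finset.mul_sum]
    exact Finset.sum_congr rfl fun i _ => Finset.sum_congr rfl fun j _ => by ring
  rw [this]
  exact mul_nonneg hr (hK n x hx c)

theorem add {K L : α → α → ℝ} (hK : PosDefKernel S K) (hL : PosDefKernel S L) :
    PosDefKernel S fun x y => K x y + L x y := by
  intro n x hx c
  simp only [mul_add, Finset.sum_add_distrib]
  exact add_nonneg (hK n x hx c) (hL n x hx c)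

theorem sum {ι : Type*} (s : Finset ι) {K : ι → α → α → ℝ} (hK : ∀ k ∈ s, PosDefKernel S (K k)) :
    PosDefKernel S fun x y => ∑ k ∈ s, K k x y := by
  intro n x hx c
  have : ∑ i, ∑ j, c i * c j * ∑ k ∈ s, K k (x i) (x j) =
      ∑ k ∈ s, ∑ i, ∑ j, c i * c j * K k (x i) (x j) := by
    simp only [Finset.mul_sum]
    rw [Finset.sum_congr rfl fun i _ => Finset.sum_comm]
    exact Finset.sum_comm
  rw [this]
  exact Finset.sum_nonneg fun k hk => hK k hk n x hx c

end PosDefKernel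

theorem posDefKernel_integral_mul {α β : Type*} [MeasurableSpace β] (μ : Measure β) (S : Set α)
    {f : α → β → ℝ} (hf : ∀ x y, Integrable (fun t => f x t * f y t) μ) :
    PosDefKernel S fun x y => ∫ t, f x t * f y t ∂μ := by
  intro n x _ c
  have : ∑ i, ∑ j, c i * c j * ∫ t, f (x i) t * f (x j) t ∂μ =
      ∫ t, (∑ i, c i * f (x i) t) ^ 2 ∂μ := by
    have hint (i j : Fin n) : Integrable (fun t => c i * f (x i) t * (c j * f (x j) t)) μ :=
      ((hf (x i) (x j)).const_mul (c i * c j)).congr (ae_of_all _ fun t => by ring)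
    simp only [sq, Finset.sum_mul_sum]
    rw [integral_finsetSum _ fun i _ => integrable_finsetSum _ fun j _ => hint i j]
    refine Finset.sum_congr rfl fun i _ => ?_
    rw [integral_finsetSum _ fun j _ => hint i j]
    refine Finset.sum_congr rfl fun j _ => ?_
    rw [← integral_const_mul]
    exact integral_congr_ae (ae_of_all _ fun t => by ring)
  rw [this]
  exact integral_nonneg fun t => sq_nonneg _

theorem indicator_Icc_mul_indicator_Icc (x y e : ℝ) :
    (fun t => (Set.Icc x (x + e)).indicator 1 t * (Set.Icc y (y + e)).indicator 1 t) =
      (Set.Icc (max x y) (min x y + e)).indicator (1 : ℝ → ℝ) := by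
  ext t
  rw [← Set.inter_indicator_mul, Set.Icc_inter_Icc, min_add_add_right, ← Pi.mul_def, one_mul]

theorem posDefKernel_tent (S : Set ℝ) (e : ℝ) : PosDefKernel S fun x y => max (e - |x - y|) 0 := by
  have hprod (x y : ℝ) := indicator_Icc_mul_indicator_Icc x y e
  have key := posDefKernel_integral_mul volume S (f := fun x => (Set.Icc x (x + e)).indicator 1)
    fun x y => by
      rw [hprod, integrable_indicator_iff measurableSet_Icc]
      exact integrableOn_const measure_Icc_lt_top.ne
  convert key using 3 with x y
  rw [hprod, integral_indicator_one measurableSet_Icc, Real.volume_real_Icc, ← max_sub_min_eq_abs']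
  ring_nf

theorem ConvexOn.antitoneOn_inter_Iic {S : Set ℝ} {f : ℝ → ℝ} (hf : ConvexOn ℝ S f) {x y : ℝ}
    (hx : x ∈ S) (hy : y ∈ S) (hxy : x < y) (hfxy : f y ≤ f x) :
    AntitoneOn f (S ∩ Set.Iic x) := by
  rintro u ⟨hu, -⟩ v ⟨hv, hvx⟩ huv
  rcases huv.eq_or_lt with rfl | huv
  · rfl
  have hslope : (f v - f u) / (v - u) ≤ 0 :=
    calc (f v - f u) / (v - u) ≤ (f y - f v) / (y - v) :=
          hf.slope_mono_adjacent hu hy huv (hvx.trans_lt hxy)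
      _ = (f v - f y) / (v - y) := by rw [← neg_div_neg_eq, neg_sub, neg_sub]
      _ ≤ (f x - f y) / (x - y) := hf.secant_mono hy hv hx (hvx.trans_lt hxy).ne hxy.ne hvx
      _ ≤ 0 := div_nonpos_of_nonneg_of_nonpos (by linarith) (by linarith)
  linarith [(div_le_iff₀ (sub_pos.2 huv)).1 hslope]

theorem exists_tent_decomposition {S : Set ℝ} (hS : Convex ℝ S) (D : Finset ℝ) (hD : D.Nonempty)
    (hDS : ↑D ⊆ S) {φ : ℝ → ℝ} (hconv : ConvexOn ℝ S φ) (hanti : AntitoneOn φ S) :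
    ∃ a : ℝ → ℝ, 0 ≤ a ∧ ∀ d ∈ D, φ d = φ (D.max' hD) + ∑ e ∈ D, a e * max (e - d) 0 := by
  induction D using Finset.induction_on_max generalizing S φ with
  | empty => exact absurd hD Finset.not_nonempty_empty
  | insert m s hlt ih =>
  have hmax : (insert m s).max' hD = m := (Finset.max'_eq_iff _ _ _).2
    ⟨Finset.mem_insert_self m s, Finset.forall_mem_insert .. |>.2 ⟨le_rfl, fun d hd => (hlt d hd).le⟩⟩
  have hm : m ∉ s := fun h => (hlt m h).false
  rw [hmax]
  rcases s.eq_empty_or_nonempty with rfl | hs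
  · exact ⟨0, le_rfl, by simp⟩
  set M := s.max' hs
  have hMm : M < m := hlt M (s.max'_mem hs)
  have hmS : m ∈ S := hDS (Finset.mem_insert_self m s)
  have hsS : ↑s ⊆ S := fun d hd => hDS (Finset.mem_insert_of_mem hd)
  have hMS : M ∈ S := hsS (s.max'_mem hs)
  set σ := (φ m - φ M) / (m - M)
  have hσ : σ ≤ 0 := div_nonpos_of_nonpos_of_nonneg (by linarith [hanti hMS hmS hMm.le]) (by linarith)
  have hσM : σ * (m - M) = φ m - φ M := div_mul_cancel₀ _ (sub_pos.2 hMm).ne'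
  clear_value σ
  -- `ψ` differs from `φ` by the affine function making `ψ M = ψ m`; it stays convex, hence is
  -- antitone below `M`, as the induction hypothesis requires.
  set ψ : ℝ → ℝ := fun t => φ t + σ * (m - t)
  have hψ : ConvexOn ℝ S ψ := hconv.add ⟨hS, fun u _ v _ p q _ _ hpq => by
    simp only [smul_eq_mul]; apply le_of_eq; linear_combination -(σ * m) * hpq⟩
  have hψM : ψ M = φ m := by simp only [ψ]; linarith
  obtain ⟨a, ha, hrep⟩ : ∃ a : ℝ → ℝ, 0 ≤ a ∧ ∀ d ∈ s, ψ d = ψ M + ∑ e ∈ s, a e * max (e - d) 0 :=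
    ih (hS.inter (convex_Iic M)) hs (fun d hd => ⟨hsS hd, s.le_max' d hd⟩)
      (hψ.subset Set.inter_subset_left (hS.inter (convex_Iic M)))
      (hψ.antitoneOn_inter_Iic hMS hmS hMm (by rw [hψM]; simp [ψ]))
  refine ⟨Function.update a m (-σ), ?_, ?_⟩
  · intro e
    rcases eq_or_ne e m with rfl | he
    · simpa using hσ
    · simpa [he] using ha e
  intro d hd
  rw [Finset.sum_insert hm, Function.update_self,
    Finset.sum_congr rfl fun e he => by rw [Function.update_of_ne (hlt e he).ne]]
  rcases Finset.mem_insert.1 hd with rfl | hd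
  · rw [Finset.sum_eq_zero fun e he => by rw [max_eq_right (by linarith [hlt e he]), mul_zero]]
    simp
  · have h := hrep d hd
    rw [max_eq_left (by linarith [s.le_max' d hd] : 0 ≤ m - d), ← hψM]
    simp only [ψ] at h ⊢
    linarith

theorem polya_criterion_general (φ : ℝ → ℝ) (hnonneg : ∀ t : ℝ, 0 ≤ φ t)
    (heven : ∀ t : ℝ, φ (-t) = φ t)
    (hconv : ConvexOn ℝ (Set.Ici 0) φ) (hdec : AntitoneOn φ (Set.Ici 0)) :
    PosDefKernel (Set.univ : Set ℝ) (fun x y => φ (x - y)) := by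
  intro n x _ c
  -- `0` makes `D` nonempty also when `n = 0`.
  set D : Finset ℝ := insert 0 (Finset.univ.image fun p : Fin n × Fin n => |x p.1 - x p.2|)
  have hD : D.Nonempty := Finset.insert_nonempty _ _
  have hDS : ↑D ⊆ Set.Ici (0 : ℝ) := by
    simp [D, Set.insert_subset_iff, Set.range_subset_iff]
  obtain ⟨a, ha, hrep⟩ := exists_tent_decomposition (convex_Ici 0) D hD hDS hconv hdec
  have hK : PosDefKernel Set.univ fun y z => φ (D.max' hD) + ∑ e ∈ D, a e * max (e - |y - z|) 0 :=
    (PosDefKernel.const (hnonneg _)).add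
      (PosDefKernel.sum D fun e _ => (posDefKernel_tent _ e).const_mul (ha e))
  have hφ (i j : Fin n) :
      φ (x i - x j) = φ (D.max' hD) + ∑ e ∈ D, a e * max (e - |x i - x j|) 0 := by
    rw [← hrep _ (by simp [D])]
    rcases abs_choice (x i - x j) with h | h
    · rw [h]
    · rw [h, heven]
  simpa only [hφ] using hK n x (fun _ => trivial) c

/-- Pólya-type criterion: an even, continuous, nonnegative function which is convex
and decreasing on `[0,∞)` is positive definite on `ℝ`. -/
theorem polya_criterion (φ : ℝ → ℝ) (hnonneg : ∀ t : ℝ, 0 ≤ φ t)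
    (hcont : Continuous φ) (heven : ∀ t : ℝ, φ (-t) = φ t)
    (hconv : ConvexOn ℝ (Set.Ici 0) φ) (hdec : AntitoneOn φ (Set.Ici 0)) :
    PosDefKernel (Set.univ : Set ℝ) (fun x y => φ (x - y)) :=
  polya_criterion_general φ hnonneg heven hconv hdec
end

section
/- Let a > 0 and let ψ : [0,a] → [0,∞) be convex with ψ(a) ≤ ψ(t) for all t ∈ [0,a] (equivalently, for convex ψ, the left derivative ψ′(a−) is ≤ 0). Then the function φ(t) := ψ(|t|) is positive definite on [−a,a] in the sense that the kernel (s,t) ↦ φ((t−s)/2) for s,t ∈ [−a,a] is positive definite. -/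
/-!
On the finitely many radii that occur in a quadratic form, a convex `ψ` with its minimum at `a`
agrees with its piecewise-linear interpolant; convexity makes the slopes increase, so that
interpolant is `ψ a + ∑ α u * max (u - r) 0` with `α u ≥ 0`. Each hinge kernel
`max (u - |t - s|) 0 = |[s, s + u] ∩ [t, t + u]|` is a Gram matrix of indicators in `L²`, hence
positive semidefinite.
-/

open MeasureTheory Real

open Set Function Matrix

theorem PosDefKernel.of_posSemidef {α : Type*} {S : Set α} {K : α → α → ℝ}
    (h : ∀ (n : ℕ) (x : Fin n → α), (∀ i, x i ∈ S) → (of fun i j ↦ K (x i) (x j)).PosSemidef) :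
    PosDefKernel S K := by
  intro n x hx c
  simpa [dotProduct, mulVec, Finset.mul_sum, mul_left_comm, mul_comm] using
    (h n x hx).dotProduct_mulVec_nonneg c

theorem posSemidef_hinge {ι : Type*} [Fintype ι] (u : ℝ) (x : ι → ℝ) :
    (of fun i j ↦ max (u - |x j - x i|) 0).PosSemidef := by
  convert posSemidef_matrix_measure_inter (μ := volume) (s := fun i ↦ Icc (x i) (x i + u))
    (fun _ ↦ measurableSet_Icc) (fun _ ↦ measure_Icc_lt_top.ne) using 1
  ext i j
  rw [of_apply, of_apply, Icc_inter_Icc, volume_real_Icc]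
  rcases le_total (x i) (x j) with h | h
  · rw [max_eq_right h, min_eq_left (by linarith), abs_of_nonneg (by linarith)]; ring_nf
  · rw [max_eq_left h, min_eq_right (by linarith), abs_of_nonpos (by linarith)]; ring_nf

noncomputable def hingeSum (F : Finset ℝ) (α : ℝ → ℝ) (r : ℝ) : ℝ :=
  ∑ u ∈ F, α u * max (u - r) 0

theorem hingeSum_of_forall_le {F : Finset ℝ} {r : ℝ} (hr : ∀ u ∈ F, r ≤ u) (α : ℝ → ℝ) :
    hingeSum F α r = ∑ u ∈ F, α u * u - (∑ u ∈ F, α u) * r := by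
  rw [hingeSum, Finset.sum_mul, ← Finset.sum_sub_distrib]
  refine Finset.sum_congr rfl fun u hu ↦ ?_
  rw [max_eq_left (sub_nonneg.2 (hr u hu))]
  ring

theorem hingeSum_insert_update {F : Finset ℝ} {u₀ u₁ : ℝ} (hu₀ : u₀ ∉ F) (hu₁ : u₁ ∈ F)
    (α : ℝ → ℝ) (β r : ℝ) :
    hingeSum (insert u₀ F) (update (α + Pi.single u₁ β) u₀ 0) r
      = hingeSum F α r + β * max (u₁ - r) 0 := by
  rw [hingeSum, Finset.sum_insert hu₀, update_self, zero_mul, zero_add]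
  rw [Finset.sum_congr rfl fun u hu ↦ by rw [update_of_ne (ne_of_mem_of_not_mem hu hu₀)]]
  simp [hingeSum, add_mul, Finset.sum_add_distrib, Pi.single_apply, hu₁]

theorem ConvexOn.add_mul_le_of_le_of_lt {s : Set ℝ} {f : ℝ → ℝ} (hf : ConvexOn ℝ s f)
    {x y z : ℝ} (hx : x ∈ s) (hz : z ∈ s) (hxy : x ≤ y) (hyz : y < z) {c m : ℝ}
    (hfy : f y = c + m * y) (hfz : f z = c + m * z) : c + m * x ≤ f x := by
  rcases hxy.eq_or_lt with rfl | hxy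
  · exact hfy.ge
  have hslope := hf.slope_mono_adjacent hx hz hxy hyz
  rw [hfy, hfz, show c + m * z - (c + m * y) = m * (z - y) by ring,
    mul_div_cancel_right₀ _ (sub_ne_zero.2 hyz.ne'), div_le_iff₀ (sub_pos.2 hxy)] at hslope
  linarith

def IsHingeInterpolant (s : Set ℝ) (ψ : ℝ → ℝ) (c : ℝ) (F : Finset ℝ) (α : ℝ → ℝ) : Prop :=
  (∀ u, 0 ≤ α u) ∧ (∀ r ∈ F, ψ r = c + hingeSum F α r) ∧
    ∀ r ∈ s, (∀ u ∈ F, r ≤ u) → c + hingeSum F α r ≤ ψ r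

theorem ConvexOn.exists_isHingeInterpolant_insert {s : Set ℝ} {ψ : ℝ → ℝ} (hψ : ConvexOn ℝ s ψ)
    {c : ℝ} {F : Finset ℝ} {α : ℝ → ℝ} (h : IsHingeInterpolant s ψ c F α) (hF : F.Nonempty)
    (hFs : ↑F ⊆ s) {u₀ : ℝ} (hu₀ : u₀ ∈ s) (hlt : ∀ u ∈ F, u₀ < u) :
    ∃ α', IsHingeInterpolant s ψ c (insert u₀ F) α' := by
  obtain ⟨hα, hrep, hle⟩ := h
  set u₁ := F.min' hF
  have hu₁ : u₁ ∈ F := F.min'_mem hF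
  have hu₀₁ : u₀ < u₁ := hlt u₁ hu₁
  -- the new hinge at `u₁` corrects the value at `u₀`; its weight is nonnegative by `hle`
  set β := (ψ u₀ - (c + hingeSum F α u₀)) / (u₁ - u₀)
  have hβ : β * (u₁ - u₀) = ψ u₀ - (c + hingeSum F α u₀) :=
    div_mul_cancel₀ _ (sub_pos.2 hu₀₁).ne'
  have hβ0 : 0 ≤ β :=
    div_nonneg (sub_nonneg.2 (hle u₀ hu₀ fun u hu ↦ (hlt u hu).le)) (sub_pos.2 hu₀₁).le
  set α' := update (α + Pi.single u₁ β) u₀ 0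
  have hsum : ∀ r, hingeSum (insert u₀ F) α' r = hingeSum F α r + β * max (u₁ - r) 0 :=
    hingeSum_insert_update (fun h ↦ (hlt u₀ h).false) hu₁ α β
  have hrep' : ∀ r ∈ insert u₀ F, ψ r = c + hingeSum (insert u₀ F) α' r := by
    intro r hr
    rw [hsum]
    rcases Finset.mem_insert.1 hr with rfl | hr
    · rw [max_eq_left (sub_nonneg.2 hu₀₁.le)]
      linarith
    · rw [max_eq_right (sub_nonpos.2 (F.min'_le r hr)), mul_zero, add_zero, hrep r hr]
  refine ⟨α', fun u ↦ ?_, hrep', fun r hr hru ↦ ?_⟩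
  · rcases eq_or_ne u u₀ with rfl | hu
    · simp [α']
    · simp only [α', update_of_ne hu, Pi.add_apply, Pi.single_apply]
      split_ifs <;> linarith [hα u]
  have haff : ∀ t ≤ u₁, c + hingeSum (insert u₀ F) α' t
      = (c + ∑ u ∈ F, α u * u + β * u₁) + -(∑ u ∈ F, α u + β) * t := by
    intro t ht
    rw [hsum, hingeSum_of_forall_le (fun u hu ↦ ht.trans (F.min'_le u hu)),
      max_eq_left (sub_nonneg.2 ht)]
    ring
  have hr₀ : r ≤ u₀ := hru u₀ (Finset.mem_insert_self u₀ F)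
  rw [haff r (hr₀.trans hu₀₁.le)]
  exact hψ.add_mul_le_of_le_of_lt hr (hFs hu₁) hr₀ hu₀₁
    ((hrep' u₀ (Finset.mem_insert_self u₀ F)).trans (haff u₀ hu₀₁.le))
    ((hrep' u₁ (Finset.mem_insert_of_mem hu₁)).trans (haff u₁ le_rfl))

theorem ConvexOn.exists_isHingeInterpolant {s : Set ℝ} {ψ : ℝ → ℝ} {a : ℝ}
    (hψ : ConvexOn ℝ s ψ) (hmin : IsMinOn ψ s a) {F : Finset ℝ} (hFs : ↑F ⊆ s)
    (haF : IsGreatest (F : Set ℝ) a) :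
    ∃ α, IsHingeInterpolant s ψ (ψ a) F α := by
  induction F using Finset.induction_on_min with
  | empty => exact absurd haF.1 (Finset.notMem_empty a)
  | insert u₀ F hlt ih =>
    rcases F.eq_empty_or_nonempty with rfl | hF
    · obtain rfl : a = u₀ := by simpa using haF.1
      exact ⟨0, fun _ ↦ le_rfl, by simp [hingeSum], fun r hr _ ↦ by
        simpa [hingeSum] using isMinOn_iff.1 hmin r hr⟩
    have hFs' : ↑F ⊆ s := fun u hu ↦ hFs (Finset.mem_insert_of_mem hu)
    have haF' : IsGreatest (F : Set ℝ) a := by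
      refine ⟨?_, fun u hu ↦ haF.2 (Finset.mem_insert_of_mem hu)⟩
      obtain ⟨v, hv⟩ := hF
      rcases Finset.mem_insert.1 haF.1 with rfl | ha
      · exact absurd (haF.2 (Finset.mem_insert_of_mem hv)) (hlt v hv).not_ge
      · exact ha
    obtain ⟨α, hα⟩ := ih hFs' haF'
    exact hψ.exists_isHingeInterpolant_insert hα hF hFs'
      (hFs (Finset.mem_insert_self u₀ F)) hlt

/-- If `ψ : [0,a] → [0,∞)` is convex and attains its minimum at `a`, then
`φ(t) := ψ(|t|)` is positive definite on `[-a,a]` in the sense that the kernel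
`(s,t) ↦ φ((t-s)/2)` on `[-a,a]` is positive definite. -/
theorem convex_min_posDef (a : ℝ) (ha : 0 < a) (ψ : ℝ → ℝ)
    (hnonneg : ∀ t ∈ Set.Icc (0 : ℝ) a, 0 ≤ ψ t)
    (hconv : ConvexOn ℝ (Set.Icc 0 a) ψ)
    (hmin : ∀ t ∈ Set.Icc (0 : ℝ) a, ψ a ≤ ψ t) :
    PosDefKernel (Set.Icc (-a) a) (fun s t => ψ (|(t - s) / 2|)) := by
  refine PosDefKernel.of_posSemidef fun n x hx ↦ ?_
  classical
  set F := insert a (Finset.univ.image fun p : Fin n × Fin n ↦ |(x p.2 - x p.1) / 2|)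
  have hFs : ↑F ⊆ Icc 0 a := by
    intro r hr
    rcases Finset.mem_insert.1 hr with rfl | hr
    · exact ⟨ha.le, le_rfl⟩
    obtain ⟨⟨i, j⟩, -, rfl⟩ := Finset.mem_image.1 hr
    refine ⟨abs_nonneg _, abs_le.2 ⟨?_, ?_⟩⟩ <;>
      linarith [(hx i).1, (hx i).2, (hx j).1, (hx j).2]
  obtain ⟨α, hα, hrep, -⟩ := hconv.exists_isHingeInterpolant (isMinOn_iff.2 hmin) hFs
    ⟨Finset.mem_insert_self a _, fun r hr ↦ (hFs hr).2⟩
  have hdecomp : (of fun i j ↦ ψ |(x j - x i) / 2|) = ψ a • vecMulVec 1 1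
      + ∑ u ∈ F, α u • of fun i j ↦ max (u - |x j / 2 - x i / 2|) 0 := by
    ext i j
    rw [of_apply, hrep _ (Finset.mem_insert_of_mem
      (Finset.mem_image_of_mem _ (Finset.mem_univ (i, j))))]
    simp [hingeSum, Matrix.sum_apply, sub_div]
  rw [hdecomp]
  exact ((posSemidef_vecMulVec_self_star 1).smul (hnonneg a ⟨ha.le, le_rfl⟩)).add
    (posSemidef_sum F fun u _ ↦ (posSemidef_hinge u _).smul (hα u))
end
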